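/- arXiv:0904.2753 — 6 statements merged into one kernel-verified Lean document; each statement's English description precedes it below -/
import Mathlib

section
/- Let S = S_c ⊔ S_a be an SC set with m = |S|, N ≥ 0, and let σ ∈ D(S, N) satisfy condition (III). Let X_σ ⊆ Conf(S) be the set of configurations satisfying conditions (C1), (C2) and (C3); identify S with {1, …, m} via the linear order <_σ, let β : S_c → {1, …, |S_c|} be the order-preserving bijection induced by <_σ, and set Y_m = {p ∈ X_σ : y_s = y_1 + s − 1 for all s ∈ S} and L = {p ∈ Y_m : x_s = 0 for all s ∈ S_a and x_s = β(s) for all s ∈ S_c}. Then L is a deformation retract of Y_m, and L is homeomorphic to the real line ℝ. -/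
/-- The configuration space `Conf S`: the set of injective maps (configurations)
`p : S → ℝ × ℝ`, as a subset of the product space `S → ℝ × ℝ`. -/
def Conf (S : Type*) : Set (S → ℝ × ℝ) := {p | Function.Injective p}

/-- Condition (I) on a surjection `σ`: consecutive values are distinct. -/
def CondI {S : Type*} {k : ℕ} (σ : Fin k → S) : Prop :=
  ∀ i j : Fin k, (j : ℕ) = (i : ℕ) + 1 → σ i ≠ σ j

/-- Condition (II): no interleaving pattern `i₁ < j₁ < i₂ < j₂` with
`i₁, i₂ ∈ σ⁻¹(s)` and `j₁, j₂ ∈ σ⁻¹(s')` for `s ≠ s'`. -/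
def CondII {S : Type*} {k : ℕ} (σ : Fin k → S) : Prop :=
  ¬ ∃ (s s' : S) (i₁ j₁ i₂ j₂ : Fin k),
      s ≠ s' ∧ i₁ < j₁ ∧ j₁ < i₂ ∧ i₂ < j₂ ∧
      σ i₁ = s ∧ σ i₂ = s ∧ σ j₁ = s' ∧ σ j₂ = s'

/-- `σ ∈ D(S, N)`: a surjection `σ : {1, …, N + |S|} → S` satisfying (I) and (II).
(The condition `k = N + |S|` is imposed as a separate hypothesis in the theorems.) -/
def MemD {S : Type*} {k : ℕ} (σ : Fin k → S) : Prop :=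
  Function.Surjective σ ∧ CondI σ ∧ CondII σ

/-- Condition (C1) on a configuration `p`: if some element of `σ⁻¹(s)` lies strictly
between two elements of `σ⁻¹(s')` (for `s ≠ s'`) then `x_s < x_{s'}`. -/
def CondC1 {S : Type*} {k : ℕ} (σ : Fin k → S) (p : S → ℝ × ℝ) : Prop :=
  ∀ s s' : S, s ≠ s' →
    (∃ i j₁ j₂ : Fin k, σ i = s ∧ σ j₁ = s' ∧ σ j₂ = s' ∧ j₁ < i ∧ i < j₂) →
    (p s).1 < (p s').1

/-- Condition (C2) on a configuration `p`: if `x_s = x_{s'}` (for `s ≠ s'`) and every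
element of `σ⁻¹(s)` is smaller than every element of `σ⁻¹(s')` then `y_s < y_{s'}`. -/
def CondC2 {S : Type*} {k : ℕ} (σ : Fin k → S) (p : S → ℝ × ℝ) : Prop :=
  ∀ s s' : S, s ≠ s' → (p s).1 = (p s').1 →
    (∀ i j : Fin k, σ i = s → σ j = s' → i < j) →
    (p s).2 < (p s').2

/-- Condition (C3) for an SC set `S = S_c ⊔ S_a` (here `Sa ⊆ S` and `S_c = Saᶜ`):
`x_s = 0` for `s ∈ S_a` and `x_s > 0` for `s ∈ S_c`. -/
def CondC3 {S : Type*} (Sa : Set S) (p : S → ℝ × ℝ) : Prop :=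
  (∀ s ∈ Sa, (p s).1 = 0) ∧ (∀ s ∉ Sa, 0 < (p s).1)

/-- Condition (III): `σ⁻¹(s)` is a one-element set for every `s ∈ S_a`. -/
def CondIII {S : Type*} {k : ℕ} (Sa : Set S) (σ : Fin k → S) : Prop :=
  ∀ s ∈ Sa, ∃! i : Fin k, σ i = s

/-- The relation `<_σ` on `S`: `s <_σ s'` iff `s ≠ s'` and either some element of
`σ⁻¹(s)` lies strictly between two elements of `σ⁻¹(s')`, or every element of
`σ⁻¹(s)` is smaller than every element of `σ⁻¹(s')`. -/
def LtSigma {S : Type*} {k : ℕ} (σ : Fin k → S) (s s' : S) : Prop :=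
  s ≠ s' ∧
  ((∃ i j₁ j₂ : Fin k, σ i = s ∧ σ j₁ = s' ∧ σ j₂ = s' ∧ j₁ < i ∧ i < j₂) ∨
   (∀ i j : Fin k, σ i = s → σ j = s' → i < j))

/-- `A` is a deformation retract of `X`: there is a continuous
`H : X × [0,1] → X` with `H(x,0) = x`, `H(x,1) ∈ A`, and `H(a,t) = a` for `a ∈ A`. -/
def IsDefRetract {E : Type*} [TopologicalSpace E] (A X : Set E) : Prop :=
  A ⊆ X ∧
  ∃ H : C(↥X × unitInterval, ↥X),
    (∀ x : ↥X, H (x, 0) = x) ∧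
    (∀ x : ↥X, (H (x, 1) : E) ∈ A) ∧
    (∀ (x : ↥X) (t : unitInterval), (x : E) ∈ A → H (x, t) = x)

/-!
Once the height `y₁` is fixed, the conditions cutting out `Y_m` are strict linear inequalities
and linear equations in the `x`-coordinates: the staircase `y_s = y₁ + s - 1` makes injectivity
and (C2) automatic. Hence `Y_m` is convex. The line `L` is the image of `ℝ` under
`c ↦ (x*, staircase at height c)`, where `x*_s = 0` on `S_a` and `x*_s = β(s)` on `S_c` is
admissible because a point nested inside another one under `σ` lies in `S_c` by (III). The
straight-line homotopy from `p` to the point of `L` at the same height stays in `Y_m` by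
convexity, and the height identifies `L` with `ℝ`.
-/

open Set Function

section ConvexRetract

variable {E Y : Type*} [AddCommGroup E] [Module ℝ E] [TopologicalSpace E]
  [IsTopologicalAddGroup E] [ContinuousSMul ℝ E] [TopologicalSpace Y]

theorem isDefRetract_range_of_convex {X : Set E} (hX : Convex ℝ X) {f : Y → E} {g : E → Y}
    (hf : Continuous f) (hg : Continuous g) (hgf : LeftInverse g f) (hfX : range f ⊆ X) :
    IsDefRetract (range f) X := by
  have hmem : ∀ (x : X) (t : unitInterval), (x : E) + (t : ℝ) • (f (g x) - x) ∈ X :=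
    fun x t => hX.add_smul_sub_mem x.2 (hfX (mem_range_self _)) t.2
  refine ⟨hfX, ⟨fun q => ⟨_, hmem q.1 q.2⟩, by fun_prop⟩, ?_, ?_, ?_⟩
  · intro x
    ext1
    simp
  · intro x
    simp
  · rintro x t ⟨y, hy⟩
    ext1
    simp [← hy, hgf y]

end ConvexRetract

section Configurations

variable {S : Type*} {k : ℕ} (σ : Fin k → S)

def NestedIn (s s' : S) : Prop :=
  ∃ i j₁ j₂ : Fin k, σ i = s ∧ σ j₁ = s' ∧ σ j₂ = s' ∧ j₁ < i ∧ i < j₂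

theorem notMem_of_nestedIn {Sa : Set S} (hIII : CondIII Sa σ) {s s' : S}
    (h : NestedIn σ s s') : s' ∉ Sa := by
  obtain ⟨i, j₁, j₂, -, hj₁, hj₂, h₁, h₂⟩ := h
  intro hs'
  obtain ⟨u, -, hu⟩ := hIII s' hs'
  exact (h₁.trans h₂).ne ((hu j₁ hj₁).trans (hu j₂ hj₂).symm)

theorem convex_setOf_condC1 : Convex ℝ {p : S → ℝ × ℝ | CondC1 σ p} := by
  refine convex_iff_forall_pos.2 fun p hp q hq a b ha hb _ s s' hne hnest => ?_
  simp only [Pi.add_apply, Pi.smul_apply, Prod.fst_add, Prod.smul_fst, smul_eq_mul]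
  exact add_lt_add (mul_lt_mul_of_pos_left (hp s s' hne hnest) ha)
    (mul_lt_mul_of_pos_left (hq s s' hne hnest) hb)

theorem convex_setOf_condC3 (Sa : Set S) : Convex ℝ {p : S → ℝ × ℝ | CondC3 Sa p} := by
  refine convex_iff_forall_pos.2 fun p hp q hq a b ha hb _ => ⟨fun s hs => ?_, fun s hs => ?_⟩
  · simp [hp.1 s hs, hq.1 s hs]
  · simpa using add_pos (mul_pos ha (hp.2 s hs)) (mul_pos hb (hq.2 s hs))

end Configurations

section ColumnIndex

variable {S : Type*} [LinearOrder S] (Sa : Set S)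

/-- The map `β` of the statement. -/
noncomputable def colIndex (s : S) : ℕ := 1 + Nat.card {s' : S // s' ∉ Sa ∧ s' < s}

theorem colIndex_pos (s : S) : 0 < colIndex Sa s := by
  unfold colIndex
  omega

theorem colIndex_lt_colIndex [Finite S] {s s' : S} (hs : s ∉ Sa) (h : s < s') :
    colIndex Sa s < colIndex Sa s' := by
  have : {t | t ∉ Sa ∧ t < s}.ncard < {t | t ∉ Sa ∧ t < s'}.ncard :=
    Set.ncard_lt_ncard ⟨fun t ht => ⟨ht.1, ht.2.trans h⟩, fun hsub => (hsub ⟨hs, h⟩).2.false⟩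
      (Set.toFinite _)
  change 1 + Nat.card {t | t ∉ Sa ∧ t < s} < 1 + Nat.card {t | t ∉ Sa ∧ t < s'}
  rw [Nat.card_coe_set_eq, Nat.card_coe_set_eq]
  omega

/-- The common `x`-coordinates `x*` of the points of `L`. -/
noncomputable def lineX : S → ℝ := Saᶜ.indicator fun s => (colIndex Sa s : ℝ)

theorem lineX_of_mem {s : S} (hs : s ∈ Sa) : lineX Sa s = 0 :=
  indicator_of_notMem (by simpa using hs) _

theorem lineX_of_notMem {s : S} (hs : s ∉ Sa) : lineX Sa s = colIndex Sa s :=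
  indicator_of_mem hs _

theorem lineX_lt_of_nestedIn [Finite S] {k : ℕ} {σ : Fin k → S} (hIII : CondIII Sa σ)
    (hlt : ∀ s s', LtSigma σ s s' → s < s') {s s' : S} (hne : s ≠ s')
    (h : NestedIn σ s s') : lineX Sa s < lineX Sa s' := by
  have hs' := notMem_of_nestedIn σ hIII h
  rw [lineX_of_notMem Sa hs']
  by_cases hs : s ∈ Sa
  · rw [lineX_of_mem Sa hs]
    exact_mod_cast colIndex_pos Sa s'
  · rw [lineX_of_notMem Sa hs]
    exact_mod_cast colIndex_lt_colIndex Sa hs (hlt s s' ⟨hne, Or.inl h⟩)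

end ColumnIndex

section Staircase

variable {m k : ℕ} {σ : Fin k → Fin m} {Sa : Set (Fin m)}

def stairConfig (x : Fin m → ℝ) (c : ℝ) : Fin m → ℝ × ℝ := fun s => (x s, c + (s : ℕ))

variable (σ Sa) in
/-- The space `Y_m`. -/
def stairConfigs (hm : 0 < m) : Set (Fin m → ℝ × ℝ) :=
  {p | (Injective p ∧ CondC1 σ p ∧ CondC2 σ p ∧ CondC3 Sa p) ∧
    ∀ s : Fin m, (p s).2 = (p ⟨0, hm⟩).2 + (s : ℕ)}

theorem injective_of_heights {p : Fin m → ℝ × ℝ} {c : ℝ}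
    (hp : ∀ s : Fin m, (p s).2 = c + (s : ℕ)) : Injective p := by
  intro s s' h
  have : ((s : ℕ) : ℝ) = (s' : ℕ) := by simpa [hp] using congrArg Prod.snd h
  exact Fin.ext (by exact_mod_cast this)

theorem condC2_of_heights (hlt : ∀ s s', LtSigma σ s s' → s < s') {p : Fin m → ℝ × ℝ} {c : ℝ}
    (hp : ∀ s : Fin m, (p s).2 = c + (s : ℕ)) : CondC2 σ p := by
  intro s s' hne _ hord
  have : s < s' := hlt s s' ⟨hne, Or.inr hord⟩
  rw [hp, hp]
  gcongr
  exact_mod_cast this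

theorem stairConfigs_eq (hm : 0 < m) (hlt : ∀ s s', LtSigma σ s s' → s < s') :
    stairConfigs σ Sa hm = {p | CondC1 σ p} ∩ {p | CondC3 Sa p} ∩
      {p | ∀ s : Fin m, (p s).2 = (p ⟨0, hm⟩).2 + (s : ℕ)} := by
  ext p
  exact ⟨fun ⟨⟨_, h1, _, h3⟩, hy⟩ => ⟨⟨h1, h3⟩, hy⟩,
    fun ⟨⟨h1, h3⟩, hy⟩ => ⟨⟨injective_of_heights hy, h1, condC2_of_heights hlt hy, h3⟩, hy⟩⟩

theorem convex_setOf_heights (hm : 0 < m) :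
    Convex ℝ {p : Fin m → ℝ × ℝ | ∀ s : Fin m, (p s).2 = (p ⟨0, hm⟩).2 + (s : ℕ)} := by
  intro p hp q hq a b _ _ hab s
  simp only [Pi.add_apply, Pi.smul_apply, Prod.snd_add, Prod.smul_snd, smul_eq_mul]
  linear_combination a * hp s + b * hq s + ((s : ℕ) : ℝ) * hab

theorem convex_stairConfigs (hm : 0 < m) (hlt : ∀ s s', LtSigma σ s s' → s < s') :
    Convex ℝ (stairConfigs σ Sa hm) := by
  rw [stairConfigs_eq hm hlt]
  exact ((convex_setOf_condC1 σ).inter (convex_setOf_condC3 Sa)).inter (convex_setOf_heights hm)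

theorem stairConfig_lineX_mem (hm : 0 < m) (hIII : CondIII Sa σ)
    (hlt : ∀ s s', LtSigma σ s s' → s < s') (c : ℝ) :
    stairConfig (lineX Sa) c ∈ stairConfigs σ Sa hm := by
  rw [stairConfigs_eq hm hlt]
  refine ⟨⟨fun s s' hne h => lineX_lt_of_nestedIn Sa hIII hlt hne h,
    fun s hs => lineX_of_mem Sa hs, fun s hs => ?_⟩, fun s => ?_⟩
  · simpa [stairConfig, lineX_of_notMem Sa hs] using colIndex_pos Sa s
  · simp [stairConfig]

theorem setOf_lineX_eq_range (hm : 0 < m) (hIII : CondIII Sa σ)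
    (hlt : ∀ s s', LtSigma σ s s' → s < s') :
    {p ∈ stairConfigs σ Sa hm | (∀ s ∈ Sa, (p s).1 = 0) ∧ ∀ s ∉ Sa, (p s).1 = colIndex Sa s} =
      range (stairConfig (lineX Sa)) := by
  ext p
  constructor
  · rintro ⟨⟨-, hy⟩, ha, hc⟩
    refine ⟨(p ⟨0, hm⟩).2, funext fun s => Prod.ext ?_ (hy s).symm⟩
    by_cases hs : s ∈ Sa
    · rw [ha s hs]
      exact lineX_of_mem Sa hs
    · rw [hc s hs]
      exact lineX_of_notMem Sa hs
  · rintro ⟨c, rfl⟩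
    exact ⟨stairConfig_lineX_mem hm hIII hlt c, fun s hs => lineX_of_mem Sa hs,
      fun s hs => lineX_of_notMem Sa hs⟩

end Staircase

theorem statement11_general (m k : ℕ) (hm : 0 < m)
    (Sa : Set (Fin m)) (σ : Fin k → Fin m) (hIII : CondIII Sa σ)
    (hid : ∀ s s' : Fin m, LtSigma σ s s' ↔ s < s') :
    let Xσ : Set (Fin m → ℝ × ℝ) :=
      {p | Function.Injective p ∧ CondC1 σ p ∧ CondC2 σ p ∧ CondC3 Sa p}
    let Ym : Set (Fin m → ℝ × ℝ) :=
      {p ∈ Xσ | ∀ s : Fin m, (p s).2 = (p ⟨0, hm⟩).2 + (s : ℕ)}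
    let β : Fin m → ℕ := fun s => 1 + Nat.card {s' : Fin m // s' ∉ Sa ∧ s' < s}
    let L : Set (Fin m → ℝ × ℝ) :=
      {p ∈ Ym | (∀ s ∈ Sa, (p s).1 = 0) ∧ (∀ s ∉ Sa, (p s).1 = (β s : ℝ))}
    IsDefRetract L Ym ∧ Nonempty (↥L ≃ₜ ℝ) := by
  intro Xσ Ym β L
  have hlt : ∀ s s', LtSigma σ s s' → s < s' := fun s s' => (hid s s').1
  have hL : L = range (stairConfig (lineX Sa)) := setOf_lineX_eq_range hm hIII hlt
  have hf : Continuous (stairConfig (lineX Sa)) := by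
    unfold stairConfig
    fun_prop
  have hg : Continuous fun p : Fin m → ℝ × ℝ => (p ⟨0, hm⟩).2 := by fun_prop
  have hgf : LeftInverse (fun p : Fin m → ℝ × ℝ => (p ⟨0, hm⟩).2) (stairConfig (lineX Sa)) :=
    fun c => by simp [stairConfig]
  rw [hL]
  exact ⟨isDefRetract_range_of_convex (convex_stairConfigs hm hlt) hf hg hgf
      (range_subset_iff.2 (stairConfig_lineX_mem hm hIII hlt)),
    ⟨(hgf.isEmbedding hg hf).toHomeomorph.symm⟩⟩

/-- SC case, with `S` identified with `{1, …, m}` via `<_σ`.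
The line `L` is a deformation retract of `Y_m`, and `L` is homeomorphic to `ℝ`. -/
theorem statement11 (m N k : ℕ) (hk : k = N + m) (hm : 0 < m)
    (Sa : Set (Fin m)) (σ : Fin k → Fin m) (hσ : MemD σ) (hIII : CondIII Sa σ)
    (hid : ∀ s s' : Fin m, LtSigma σ s s' ↔ s < s') :
    let Xσ : Set (Fin m → ℝ × ℝ) :=
      {p | Function.Injective p ∧ CondC1 σ p ∧ CondC2 σ p ∧ CondC3 Sa p}
    let Ym : Set (Fin m → ℝ × ℝ) :=
      {p ∈ Xσ | ∀ s : Fin m, (p s).2 = (p ⟨0, hm⟩).2 + (s : ℕ)}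
    let β : Fin m → ℕ := fun s => 1 + Nat.card {s' : Fin m // s' ∉ Sa ∧ s' < s}
    let L : Set (Fin m → ℝ × ℝ) :=
      {p ∈ Ym | (∀ s ∈ Sa, (p s).1 = 0) ∧ (∀ s ∉ Sa, (p s).1 = (β s : ℝ))}
    IsDefRetract L Ym ∧ Nonempty (↥L ≃ₜ ℝ) :=
  statement11_general m k hm Sa σ hIII hid
end

section
/- Let T be a finite set, {S_t}_{t∈T} a family of finite sets with S = ⊔_{t∈T} S_t, and let I_s (s ∈ S), J_t (t ∈ T), and J be nonempty finite linearly ordered sets. Let w = (>_w, Q_w) be an element of se(T)^J with inputs {J_t}_{t∈T}, and for each t ∈ T let u_t = (>_{u_t}, Q_{u_t}) be an element of se(S_t)^{J_t} with inputs {I_s}_{s∈S_t}. Then: (a) there exists a unique total order >_v on ⊔_{s∈S} I_s that restricts to >_{u_t} on ⊔_{s∈S_t} I_s for each t ∈ T and makes the map ⊔_{t∈T} Q_{u_t} : ⊔_{s∈S} I_s → (⊔_{t∈T} J_t, >_w) nondecreasing; (b) the pair (>_v, Q_w ∘ ⊔_{t∈T} Q_{u_t}) is an element of se(S)^J with inputs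 {I_s}_{s∈S}, i.e., >_v restricts to the given order on each I_s, >_v satisfies the non-interleaving condition, and Q_w ∘ ⊔ Q_{u_t} is nondecreasing with respect to >_v. -/
/-- A total order (strict, as `<`) on the disjoint union `⊔_{i} A i` which restricts
to the given linear order on each `A i` and satisfies the non-interleaving
condition. -/
def IsSeOrder {ι : Type*} {A : ι → Type*} [∀ i, LinearOrder (A i)]
    (r : (Σ i, A i) → (Σ i, A i) → Prop) : Prop :=
  IsStrictTotalOrder (Σ i, A i) r ∧
  (∀ (i : ι) (a b : A i), a < b ↔ r ⟨i, a⟩ ⟨i, b⟩) ∧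
  (∀ i₁ i₂ : ι, i₁ ≠ i₂ → ¬ ∃ (a₁ b₁ : A i₁) (a₂ b₂ : A i₂),
      r ⟨i₁, a₁⟩ ⟨i₂, a₂⟩ ∧ r ⟨i₂, a₂⟩ ⟨i₁, b₁⟩ ∧ r ⟨i₁, b₁⟩ ⟨i₂, b₂⟩)

/-- An element of `se(ι)^J` with inputs `{A i}`: a total order as in `IsSeOrder`
together with a map `Q : ⊔ A i → J` which is nondecreasing with respect to it. -/
def IsSeElem {ι : Type*} {A : ι → Type*} [∀ i, LinearOrder (A i)]
    {J : Type*} [LinearOrder J]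
    (r : (Σ i, A i) → (Σ i, A i) → Prop) (Q : (Σ i, A i) → J) : Prop :=
  IsSeOrder r ∧ ∀ x y : Σ i, A i, r x y → Q x ≤ Q y

section

variable {T : Type*} [Fintype T] {St : T → Type*} [∀ t, Fintype (St t)]
  {I : ∀ t, St t → Type*} [∀ t s, Fintype (I t s)] [∀ t s, LinearOrder (I t s)]
  [∀ t s, Nonempty (I t s)]
  {Jt : T → Type*} [∀ t, Fintype (Jt t)] [∀ t, LinearOrder (Jt t)]
  [∀ t, Nonempty (Jt t)]
  {J : Type*} [Fintype J] [LinearOrder J] [Nonempty J]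

/-- The map `⊔_t Q_{u_t} : ⊔_{s ∈ S} I_s → ⊔_{t ∈ T} J_t`, where
`S = ⊔_t S_t`. -/
def FMap (Qu : ∀ t, (Σ s : St t, I t s) → Jt t)
    (x : Σ q : Σ t, St t, I q.1 q.2) : Σ t, Jt t :=
  ⟨x.1.1, Qu x.1.1 ⟨x.1.2, x.2⟩⟩

/-- The characterizing conditions of the order `>_v` of the operadic composition:
it is a total order on `⊔_{s ∈ S} I_s` restricting to `>_{u_t}` on
`⊔_{s ∈ S_t} I_s` for each `t`, and it makes `⊔_t Q_{u_t}` nondecreasing with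
respect to `>_w`. -/
def IsCompOrder (rW : (Σ t, Jt t) → (Σ t, Jt t) → Prop)
    (ru : ∀ t, (Σ s : St t, I t s) → (Σ s : St t, I t s) → Prop)
    (Qu : ∀ t, (Σ s : St t, I t s) → Jt t)
    (rv : (Σ q : Σ t, St t, I q.1 q.2) → (Σ q : Σ t, St t, I q.1 q.2) → Prop) :
    Prop :=
  IsStrictTotalOrder (Σ q : Σ t, St t, I q.1 q.2) rv ∧
  (∀ (t : T) (a b : Σ s : St t, I t s),
      ru t a b ↔ rv ⟨⟨t, a.1⟩, a.2⟩ ⟨⟨t, b.1⟩, b.2⟩) ∧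
  (∀ x y : Σ q : Σ t, St t, I q.1 q.2,
      rv x y → FMap Qu x = FMap Qu y ∨ rW (FMap Qu x) (FMap Qu y))

end


/-!
The composite order is forced to be lexicographic: two elements are compared first by their
images under `⊔_t Q_{u_t}` in `(⊔_t J_t, >_w)` and, when these agree (so that both lie in the
same block `t`), by `>_{u_t}`. Since `Q_{u_t}` is nondecreasing, this order restricts to
`>_{u_t}` on the block `t`. Non-interleaving of the composite order is inherited from `>_{u_t}`
for two inputs in the same block and from `>_w` for inputs in different blocks.
-/

section FiberLex

variable {X Y : Type*}

def fiberLex (r : Y → Y → Prop) (f : X → Y) (s : X → X → Prop) (x y : X) : Prop :=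
  r (f x) (f y) ∨ f x = f y ∧ s x y

theorem fiberLex_isStrictTotalOrder {r : Y → Y → Prop} {f : X → Y} {s : X → X → Prop}
    [IsStrictTotalOrder Y r] [IsStrictOrder X s]
    (hs : ∀ x y, f x = f y → s x y ∨ x = y ∨ s y x) :
    IsStrictTotalOrder X (fiberLex r f s) where
  trichotomous x y hxy hyx := by
    rcases trichotomous_of r (f x) (f y) with h | h | h
    · exact absurd (Or.inl h) hxy
    · rcases hs x y h with h' | h' | h'
      · exact absurd (Or.inr ⟨h, h'⟩) hxy
      · exact h'
      · exact absurd (Or.inr ⟨h.symm, h'⟩) hyx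
    · exact absurd (Or.inl h) hyx
  irrefl x := by
    rintro (h | ⟨-, h⟩)
    exacts [irrefl_of r _ h, irrefl_of s x h]
  trans x y z := by
    rintro (hxy | ⟨hxy, sxy⟩) (hyz | ⟨hyz, syz⟩)
    · exact Or.inl (trans_of r hxy hyz)
    · exact Or.inl (hyz ▸ hxy)
    · exact Or.inl (hxy ▸ hyz)
    · exact Or.inr ⟨hxy.trans hyz, trans_of s sxy syz⟩

theorem eq_fiberLex {r : Y → Y → Prop} {f : X → Y} {s r' : X → X → Prop}
    [IsStrictOrder Y r] [Std.Trichotomous r']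
    (hmono : ∀ x y, r' x y → f x = f y ∨ r (f x) (f y))
    (hfib : ∀ x y, f x = f y → (r' x y ↔ s x y)) :
    r' = fiberLex r f s := by
  funext x y
  refine propext ⟨fun h => ?_, ?_⟩
  · rcases hmono x y h with he | hr
    exacts [Or.inr ⟨he, (hfib x y he).1 h⟩, Or.inl hr]
  · rintro (hr | ⟨he, hs⟩)
    · rcases trichotomous_of r' x y with h | rfl | h
      · exact h
      · exact absurd hr (irrefl_of r _)
      · rcases hmono y x h with he | hr'
        exacts [absurd (he ▸ hr) (irrefl_of r _), absurd hr' (asymm_of r hr)]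
    · exact (hfib x y he).2 hs

end FiberLex

section Composite

variable {T : Type*} {St : T → Type*} {I : ∀ t, St t → Type*}

def blockEmb (t : T) (a : Σ s : St t, I t s) : Σ q : Σ t, St t, I q.1 q.2 :=
  ⟨⟨t, a.1⟩, a.2⟩

theorem blockEmb_eq_blockEmb_iff {t t' : T} {a : Σ s : St t, I t s} {a' : Σ s : St t', I t' s} :
    blockEmb t a = blockEmb t' a' ↔ (⟨t, a⟩ : Σ t, Σ s : St t, I t s) = ⟨t', a'⟩ :=
  (Equiv.sigmaAssoc I).symm.injective.eq_iff (a := ⟨t, a⟩) (b := ⟨t', a'⟩)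

@[simp]
theorem fMap_blockEmb {Jt : T → Type*} (Qu : ∀ t, (Σ s : St t, I t s) → Jt t) (t : T)
    (a : Σ s : St t, I t s) : FMap Qu (blockEmb t a) = ⟨t, Qu t a⟩ :=
  rfl

def blockRel (ru : ∀ t, (Σ s : St t, I t s) → (Σ s : St t, I t s) → Prop)
    (x y : Σ q : Σ t, St t, I q.1 q.2) : Prop :=
  ∃ t a b, x = blockEmb t a ∧ y = blockEmb t b ∧ ru t a b

variable {ru : ∀ t, (Σ s : St t, I t s) → (Σ s : St t, I t s) → Prop}

theorem blockRel_blockEmb_iff {t : T} {a b : Σ s : St t, I t s} :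
    blockRel ru (blockEmb t a) (blockEmb t b) ↔ ru t a b := by
  refine ⟨?_, fun h => ⟨t, a, b, rfl, rfl, h⟩⟩
  rintro ⟨t', a', b', ha, hb, h⟩
  rw [blockEmb_eq_blockEmb_iff, Sigma.mk.inj_iff] at ha hb
  obtain ⟨rfl, ha⟩ := ha
  rwa [eq_of_heq ha, eq_of_heq hb.2]

theorem blockRel_isStrictOrder (hu : ∀ t, IsStrictOrder _ (ru t)) :
    IsStrictOrder _ (blockRel ru) where
  irrefl x := by
    rintro ⟨t, a, b, rfl, hb, h⟩
    rw [blockEmb_eq_blockEmb_iff, sigma_mk_injective.eq_iff] at hb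
    exact (hu t).irrefl a (hb ▸ h)
  trans x y z := by
    rintro ⟨t, a, b, rfl, rfl, hab⟩ ⟨t', b', c, hb, rfl, hbc⟩
    rw [blockEmb_eq_blockEmb_iff, Sigma.mk.inj_iff] at hb
    obtain ⟨rfl, hb⟩ := hb
    exact ⟨t, a, c, rfl, rfl, (hu t).trans _ _ _ hab (eq_of_heq hb ▸ hbc)⟩

theorem blockRel_trichotomous_of_fst_eq (hu : ∀ t, Std.Trichotomous (ru t))
    {x y : Σ q : Σ t, St t, I q.1 q.2} (h : x.1.1 = y.1.1) :
    blockRel ru x y ∨ x = y ∨ blockRel ru y x := by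
  obtain ⟨⟨t, s⟩, i⟩ := x
  obtain ⟨⟨t', s'⟩, j⟩ := y
  obtain rfl : t = t' := h
  rcases trichotomous_of (ru t) ⟨s, i⟩ ⟨s', j⟩ with h | h | h
  · exact Or.inl ⟨t, _, _, rfl, rfl, h⟩
  · exact Or.inr (Or.inl (congrArg (blockEmb t) h))
  · exact Or.inr (Or.inr ⟨t, _, _, rfl, rfl, h⟩)

variable {Jt : T → Type*} {rW : (Σ t, Jt t) → (Σ t, Jt t) → Prop}
  {Qu : ∀ t, (Σ s : St t, I t s) → Jt t}
  {rv : (Σ q : Σ t, St t, I q.1 q.2) → (Σ q : Σ t, St t, I q.1 q.2) → Prop}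

def compOrder (rW : (Σ t, Jt t) → (Σ t, Jt t) → Prop)
    (ru : ∀ t, (Σ s : St t, I t s) → (Σ s : St t, I t s) → Prop)
    (Qu : ∀ t, (Σ s : St t, I t s) → Jt t) :
    (Σ q : Σ t, St t, I q.1 q.2) → (Σ q : Σ t, St t, I q.1 q.2) → Prop :=
  fiberLex rW (FMap Qu) (blockRel ru)

theorem eq_compOrder [IsStrictOrder _ rW] (h : IsCompOrder rW ru Qu rv) :
    rv = compOrder rW ru Qu :=
  have := h.1
  eq_fiberLex h.2.2 fun x y hxy => by
    obtain ⟨⟨t, s⟩, i⟩ := x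
    obtain ⟨⟨t', s'⟩, j⟩ := y
    obtain rfl : t = t' := congrArg Sigma.fst hxy
    exact (h.2.1 t ⟨s, i⟩ ⟨s', j⟩).symm.trans blockRel_blockEmb_iff.symm

theorem IsCompOrder.rel_of_fst_ne (h : IsCompOrder rW ru Qu rv)
    {x y : Σ q : Σ t, St t, I q.1 q.2} (hxy : rv x y) (hne : x.1.1 ≠ y.1.1) :
    rW (FMap Qu x) (FMap Qu y) :=
  (h.2.2 x y hxy).resolve_left fun he => hne (congrArg Sigma.fst he :)

variable [∀ t s, LinearOrder (I t s)] [∀ t, LinearOrder (Jt t)]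

theorem isCompOrder_compOrder [IsStrictTotalOrder _ rW]
    (hWr : ∀ (t : T) (a b : Jt t), a < b ↔ rW ⟨t, a⟩ ⟨t, b⟩)
    (hu : ∀ t, IsSeElem (ru t) (Qu t)) :
    IsCompOrder rW ru Qu (compOrder rW ru Qu) := by
  have := blockRel_isStrictOrder fun t => (hu t).1.1.toIsStrictOrder
  refine ⟨fiberLex_isStrictTotalOrder fun x y h => ?_, fun t a b => ?_,
    fun x y h => h.symm.imp_left And.left⟩
  · exact blockRel_trichotomous_of_fst_eq (fun t => (hu t).1.1.toTrichotomous)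
      (congrArg Sigma.fst h :)
  · have := (hu t).1.1
    have hblock : ru t = fiberLex (· < ·) (Qu t) (ru t) :=
      eq_fiberLex (fun a b h => ((hu t).2 a b h).eq_or_lt) fun _ _ _ => Iff.rfl
    change ru t a b ↔ fiberLex rW (FMap Qu) (blockRel ru) (blockEmb t a) (blockEmb t b)
    conv_lhs => rw [hblock]
    simp only [fiberLex, fMap_blockEmb, blockRel_blockEmb_iff, ← hWr, Sigma.mk.inj_iff,
      heq_eq_eq, true_and]

theorem isSeElem_of_isCompOrder {J : Type*} [LinearOrder J] {Qw : (Σ t, Jt t) → J}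
    (hw : IsSeElem rW Qw) (hu : ∀ t, IsSeOrder (ru t)) (h : IsCompOrder rW ru Qu rv) :
    IsSeElem (A := fun q : Σ t, St t => I q.1 q.2) rv (fun x => Qw (FMap Qu x)) := by
  obtain ⟨⟨-, -, hWsep⟩, hQw⟩ := hw
  have hres := h.2.1
  refine ⟨⟨h.1, fun q a b => ((hu q.1).2.1 q.2 a b).trans (hres q.1 _ _), ?_⟩, fun x y hxy => ?_⟩
  · rintro ⟨t₁, s₁⟩ ⟨t₂, s₂⟩ hne ⟨a₁, b₁, a₂, b₂, h₁, h₂, h₃⟩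
    by_cases ht : t₁ = t₂
    · subst ht
      exact (hu t₁).2.2 s₁ s₂ (fun hs => hne (hs ▸ rfl))
        ⟨a₁, b₁, a₂, b₂, (hres t₁ ⟨_, _⟩ ⟨_, _⟩).2 h₁, (hres t₁ ⟨_, _⟩ ⟨_, _⟩).2 h₂,
          (hres t₁ ⟨_, _⟩ ⟨_, _⟩).2 h₃⟩
    · exact hWsep t₁ t₂ ht ⟨_, _, _, _, h.rel_of_fst_ne h₁ ht,
        h.rel_of_fst_ne h₂ (Ne.symm ht), h.rel_of_fst_ne h₃ ht⟩
  · rcases h.2.2 x y hxy with he | hr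
    exacts [(congrArg Qw he).le, hQw _ _ hr]

end Composite

theorem statement12_general
    {T : Type*} {St : T → Type*}
    {I : ∀ t, St t → Type*} [∀ t s, LinearOrder (I t s)]
    {Jt : T → Type*} [∀ t, LinearOrder (Jt t)]
    {J : Type*} [LinearOrder J]
    (rW : (Σ t, Jt t) → (Σ t, Jt t) → Prop) (Qw : (Σ t, Jt t) → J)
    (hw : IsSeElem rW Qw)
    (ru : ∀ t, (Σ s : St t, I t s) → (Σ s : St t, I t s) → Prop)
    (Qu : ∀ t, (Σ s : St t, I t s) → Jt t)
    (hu : ∀ t, IsSeElem (ru t) (Qu t)) :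
    (∃! rv : (Σ q : Σ t, St t, I q.1 q.2) → (Σ q : Σ t, St t, I q.1 q.2) → Prop,
        IsCompOrder rW ru Qu rv) ∧
    (∀ rv : (Σ q : Σ t, St t, I q.1 q.2) → (Σ q : Σ t, St t, I q.1 q.2) → Prop,
        IsCompOrder rW ru Qu rv →
        IsSeElem (A := fun q : Σ t, St t => I q.1 q.2) rv
          (fun x => Qw (FMap Qu x))) := by
  have := hw.1.1
  exact ⟨⟨compOrder rW ru Qu, isCompOrder_compOrder hw.1.2.1 hu, fun _ h => eq_compOrder h⟩,
    fun _ h => isSeElem_of_isCompOrder hw (fun t => (hu t).1) h⟩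

/-- (a) There is a unique total order `>_v` on `⊔_{s∈S} I_s`
restricting to each `>_{u_t}` and making `⊔_t Q_{u_t}` nondecreasing; (b) together
with `Q_w ∘ ⊔_t Q_{u_t}` it is an element of `se(S)^J` with inputs `{I_s}_{s∈S}`. -/
theorem statement12
    {T : Type*} [Fintype T] {St : T → Type*} [∀ t, Fintype (St t)]
    {I : ∀ t, St t → Type*} [∀ t s, Fintype (I t s)] [∀ t s, LinearOrder (I t s)]
    [∀ t s, Nonempty (I t s)]
    {Jt : T → Type*} [∀ t, Fintype (Jt t)] [∀ t, LinearOrder (Jt t)]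
    [∀ t, Nonempty (Jt t)]
    {J : Type*} [Fintype J] [LinearOrder J] [Nonempty J]
    (rW : (Σ t, Jt t) → (Σ t, Jt t) → Prop) (Qw : (Σ t, Jt t) → J)
    (hw : IsSeElem rW Qw)
    (ru : ∀ t, (Σ s : St t, I t s) → (Σ s : St t, I t s) → Prop)
    (Qu : ∀ t, (Σ s : St t, I t s) → Jt t)
    (hu : ∀ t, IsSeElem (ru t) (Qu t)) :
    (∃! rv : (Σ q : Σ t, St t, I q.1 q.2) → (Σ q : Σ t, St t, I q.1 q.2) → Prop,
        IsCompOrder rW ru Qu rv) ∧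
    (∀ rv : (Σ q : Σ t, St t, I q.1 q.2) → (Σ q : Σ t, St t, I q.1 q.2) → Prop,
        IsCompOrder rW ru Qu rv →
        IsSeElem (A := fun q : Σ t, St t => I q.1 q.2) rv
          (fun x => Qw (FMap Qu x))) :=
  statement12_general rW Qw hw ru Qu hu
end

section
/- Let S be a finite set, let I_s (s ∈ S) be nonempty finite linearly ordered sets, let > be a total order on X = ⊔_{s∈S} I_s restricting to the given order on each I_s, and let Q : X → J be a map into a finite linearly ordered set J that is nondecreasing with respect to >. Let c be the number of elementary equivalence classes of X. If c + |J| − 1 < |X|, then there exist two distinct elements i₁ < i₂ of X that are consecutive in the order >, lie in the same I_s (hence are elementarily equivalent), and satisfy Q(i₁) = Q(i₂). -/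
/-- Elementary equivalence of `x, y ∈ ⊔_i A i` with respect to the order `r`:
they lie in the same `A i` and every element strictly between them lies in `A i`. -/
def ElemEquiv {ι : Type*} {A : ι → Type*}
    (r : (Σ i, A i) → (Σ i, A i) → Prop) (x y : Σ i, A i) : Prop :=
  x.1 = y.1 ∧
    ∀ z : Σ i, A i, (r x z ∧ r z y) ∨ (r y z ∧ r z x) → z.1 = x.1

/-- The number of elementary equivalence classes. -/
noncomputable def NumClasses {ι : Type*} {A : ι → Type*}
    (r : (Σ i, A i) → (Σ i, A i) → Prop) : ℕ :=
  Nat.card {C : Set (Σ i, A i) // ∃ x, C = {y | ElemEquiv r x y}}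

/-!
Enumerate `X` increasingly as `x₀ < ⋯ < x_{n-1}`. If no pair of consecutive elements is
elementarily equivalent with equal `Q`-values, then each of the `n - 1` steps `x_k ⋖ x_{k+1}`
either changes the elementary class or strictly increases `Q`. Elementary classes are intervals,
so the class changes at most `c - 1` times, and `Q` is monotone, so it strictly increases at most
`|J| - 1` times; hence `n - 1 ≤ (c - 1) + (|J| - 1)`.
-/

open Set

section CovBy

variable {α β γ : Type*} [LinearOrder α]

theorem ne_of_lt_of_covBy_of_ne {f : α → β} (hf : ∀ y, (f ⁻¹' {y}).OrdConnected)
    {a b c : α} (hab : a ⋖ b) (hne : f a ≠ f b) (hcb : c < b) : f c ≠ f b :=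
  fun h => hne ((hf (f b)).out' h rfl ⟨hab.le_of_lt hcb, hab.le⟩)

variable [Finite α]

theorem ncard_covBy_ne_add_one_le [Nonempty α] (f : α → β)
    (hf : ∀ y, (f ⁻¹' {y}).OrdConnected) :
    {b | ∃ a, a ⋖ b ∧ f a ≠ f b}.ncard + 1 ≤ (range f).ncard := by
  obtain ⟨a₀, ha₀⟩ := Finite.exists_min (id : α → α)
  have hmaps : ∀ b ∈ {b | ∃ a, a ⋖ b ∧ f a ≠ f b}, f b ∈ range f \ {f a₀} := by
    rintro b ⟨a, hab, hne⟩
    exact ⟨mem_range_self b,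
      (ne_of_lt_of_covBy_of_ne hf hab hne ((ha₀ a).trans_lt hab.lt)).symm⟩
  have hinj : InjOn f {b | ∃ a, a ⋖ b ∧ f a ≠ f b} := by
    intro b ⟨a, hab, hne⟩ b' ⟨a', hab', hne'⟩ h
    rcases lt_trichotomy b b' with hlt | heq | hlt
    · exact absurd h (ne_of_lt_of_covBy_of_ne hf hab' hne' hlt)
    · exact heq
    · exact absurd h.symm (ne_of_lt_of_covBy_of_ne hf hab hne hlt)
  calc {b | ∃ a, a ⋖ b ∧ f a ≠ f b}.ncard + 1 ≤ (range f \ {f a₀}).ncard + 1 := by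
        gcongr
        exact ncard_le_ncard_of_injOn f hmaps hinj
    _ = (range f).ncard := ncard_sdiff_singleton_add_one (mem_range_self a₀)

theorem card_le_ncard_covBy_add_one [Nonempty α] :
    Nat.card α ≤ {b : α | ∃ a, a ⋖ b}.ncard + 1 := by
  obtain ⟨a₀, ha₀⟩ := Finite.exists_min (id : α → α)
  have hsub : univ \ {a₀} ⊆ {b : α | ∃ a, a ⋖ b} := by
    intro b hb
    obtain ⟨a, -, hab⟩ := exists_le_covBy_of_lt ((ha₀ b).lt_of_ne (Ne.symm hb.2))
    exact ⟨a, hab⟩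
  calc Nat.card α = (univ \ {a₀}).ncard + 1 := by
        rw [ncard_sdiff_singleton_add_one (mem_univ a₀), ncard_univ]
    _ ≤ {b : α | ∃ a, a ⋖ b}.ncard + 1 := Nat.add_le_add_right (ncard_le_ncard hsub) 1

theorem card_add_one_le_of_covBy_ne [Nonempty α] (f : α → β) (g : α → γ)
    (hf : ∀ y, (f ⁻¹' {y}).OrdConnected) (hg : ∀ y, (g ⁻¹' {y}).OrdConnected)
    (hfg : ∀ a b, a ⋖ b → f a ≠ f b ∨ g a ≠ g b) :
    Nat.card α + 1 ≤ (range f).ncard + (range g).ncard := by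
  have hsub : {b : α | ∃ a, a ⋖ b} ⊆
      {b | ∃ a, a ⋖ b ∧ f a ≠ f b} ∪ {b | ∃ a, a ⋖ b ∧ g a ≠ g b} := by
    rintro b ⟨a, hab⟩
    rcases hfg a b hab with h | h
    exacts [Or.inl ⟨a, hab, h⟩, Or.inr ⟨a, hab, h⟩]
  have hcovBy := (ncard_le_ncard hsub).trans (ncard_union_le _ _)
  have := card_le_ncard_covBy_add_one (α := α)
  have := ncard_covBy_ne_add_one_le f hf
  have := ncard_covBy_ne_add_one_le g hg
  omega

end CovBy

section ElemEquiv

variable {ι : Type*} {A : ι → Type*} {r : (Σ i, A i) → (Σ i, A i) → Prop}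

def elemClass (r : (Σ i, A i) → (Σ i, A i) → Prop) (x : Σ i, A i) : Set (Σ i, A i) :=
  {y | ElemEquiv r x y}

theorem ElemEquiv.symm {x y : Σ i, A i} (h : ElemEquiv r x y) : ElemEquiv r y x :=
  ⟨h.1.symm, fun z hz => (h.2 z hz.symm).trans h.1⟩

variable [IsStrictTotalOrder (Σ i, A i) r]

theorem elemEquiv_refl (x : Σ i, A i) : ElemEquiv r x x := by
  refine ⟨rfl, fun z hz => ?_⟩
  rcases hz with ⟨h1, h2⟩ | ⟨h1, h2⟩ <;> exact absurd (trans_of r h1 h2) (irrefl_of r x)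

theorem ElemEquiv.trans {x y w : Σ i, A i} (hxy : ElemEquiv r x y) (hyw : ElemEquiv r y w) :
    ElemEquiv r x w := by
  refine ⟨hxy.1.trans hyw.1, fun z hz => ?_⟩
  rcases trichotomous_of r z y with hzy | rfl | hyz
  · rcases hz with ⟨h1, -⟩ | ⟨h1, -⟩
    · exact hxy.2 z (Or.inl ⟨h1, hzy⟩)
    · exact (hyw.2 z (Or.inr ⟨h1, hzy⟩)).trans hxy.1.symm
  · exact hxy.1.symm
  · rcases hz with ⟨-, h2⟩ | ⟨-, h2⟩
    · exact (hyw.2 z (Or.inl ⟨hyz, h2⟩)).trans hxy.1.symm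
    · exact hxy.2 z (Or.inr ⟨hyz, h2⟩)

theorem ElemEquiv.of_between {x y z : Σ i, A i} (hxy : ElemEquiv r x y)
    (hxz : x = z ∨ r x z) (hzy : z = y ∨ r z y) : ElemEquiv r z y := by
  rcases hxz with rfl | hxz
  · exact hxy
  rcases hzy with rfl | hzy
  · exact elemEquiv_refl z
  have hz : z.1 = x.1 := hxy.2 z (Or.inl ⟨hxz, hzy⟩)
  refine ⟨hz.trans hxy.1, fun w hw => ?_⟩
  rcases hw with ⟨hzw, hwy⟩ | ⟨hyw, hwz⟩
  · exact (hxy.2 w (Or.inl ⟨trans_of r hxz hzw, hwy⟩)).trans hz.symm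
  · exact absurd (trans_of r hwz (trans_of r hzy hyw)) (irrefl_of r w)

theorem elemClass_eq_iff {x y : Σ i, A i} :
    elemClass r x = elemClass r y ↔ ElemEquiv r x y := by
  refine ⟨fun h => ?_, fun h => Set.ext fun z => ⟨h.symm.trans, h.trans⟩⟩
  have hy : y ∈ elemClass r y := elemEquiv_refl y
  rwa [← h] at hy

theorem elemClass_eq_of_between {x y z : Σ i, A i} (hxy : elemClass r x = elemClass r y)
    (hxz : x = z ∨ r x z) (hzy : z = y ∨ r z y) : elemClass r z = elemClass r y :=
  elemClass_eq_iff.2 ((elemClass_eq_iff.1 hxy).of_between hxz hzy)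

end ElemEquiv

theorem statement14_general {S : Type*} [Fintype S] {I : S → Type*} [∀ s, Fintype (I s)]
    {J : Type*} [Fintype J] [LinearOrder J]
    (r : (Σ s, I s) → (Σ s, I s) → Prop) (Q : (Σ s, I s) → J)
    (hr : IsStrictTotalOrder (Σ s, I s) r)
    (hQ : ∀ x y : Σ s, I s, r x y → Q x ≤ Q y)
    (hcard : NumClasses r + Fintype.card J - 1 < Fintype.card (Σ s, I s)) :
    ∃ i₁ i₂ : Σ s, I s, r i₁ i₂ ∧ (¬ ∃ z, r i₁ z ∧ r z i₂) ∧
      i₁.1 = i₂.1 ∧ ElemEquiv r i₁ i₂ ∧ Q i₁ = Q i₂ := by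
  classical
  let := linearOrderOfSTO r
  have : Nonempty (Σ s, I s) := Fintype.card_pos_iff.mp (by omega)
  by_contra hno
  have hstep : ∀ a b : Σ s, I s, a ⋖ b → elemClass r a ≠ elemClass r b ∨ Q a ≠ Q b := by
    intro a b hab
    by_contra! h
    have hE := elemClass_eq_iff.1 h.1
    exact hno ⟨a, b, hab.lt, fun ⟨z, haz, hzb⟩ => hab.2 haz hzb, hE.1, hE, h.2⟩
  have hclass : ∀ C, (elemClass r ⁻¹' {C}).OrdConnected := fun _ =>
    ⟨fun _ hx _ hy _ hz => (elemClass_eq_of_between (hx.trans hy.symm) hz.1 hz.2).trans hy⟩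
  have hQmono : Monotone Q := fun a b hab => hab.elim (fun h => h ▸ le_rfl) (hQ a b)
  have key := card_add_one_le_of_covBy_ne (elemClass r) Q hclass
    (fun _ => ordConnected_singleton.preimage_mono hQmono) hstep
  have hc : (range (elemClass r)).ncard = NumClasses r :=
    Nat.card_congr (Equiv.subtypeEquivRight fun C => by simp [elemClass, eq_comm])
  have hJ : (range Q).ncard ≤ Fintype.card J :=
    (ncard_le_card _).trans_eq Nat.card_eq_fintype_card
  rw [Nat.card_eq_fintype_card, hc] at key
  omega

/-- If the number `c` of elementary equivalence classes satisfies
`c + |J| − 1 < |X|` (`X = ⊔_s I_s`), then there are two consecutive elements of `X`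
lying in the same `I_s` (hence elementarily equivalent) with the same `Q`-image. -/
theorem statement14 {S : Type*} [Fintype S] {I : S → Type*} [∀ s, Fintype (I s)]
    [∀ s, LinearOrder (I s)] [∀ s, Nonempty (I s)]
    {J : Type*} [Fintype J] [LinearOrder J]
    (r : (Σ s, I s) → (Σ s, I s) → Prop) (Q : (Σ s, I s) → J)
    (hr : IsStrictTotalOrder (Σ s, I s) r)
    (hres : ∀ (s : S) (a b : I s), a < b ↔ r ⟨s, a⟩ ⟨s, b⟩)
    (hQ : ∀ x y : Σ s, I s, r x y → Q x ≤ Q y)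
    (hcard : NumClasses r + Fintype.card J - 1 < Fintype.card (Σ s, I s)) :
    ∃ i₁ i₂ : Σ s, I s, r i₁ i₂ ∧ (¬ ∃ z, r i₁ z ∧ r z i₂) ∧
      i₁.1 = i₂.1 ∧ ElemEquiv r i₁ i₂ ∧ Q i₁ = Q i₂ :=
  statement14_general r Q hr hQ hcard
end

section
/- Let S be a finite set, let I_s (s ∈ S) be nonempty finite linearly ordered sets, let J be a finite linearly ordered set, and let J′ = J ⊔ {M} be J with a new greatest element M adjoined. Then the assignment π ↦ (π|_{⊔ I_s}, Q), where Q(x) is the least element j ∈ J with x <_π j if such j exists and Q(x) = M otherwise, is a bijection from the set of total orders π on (⊔_{s∈S} I_s) ⊔ J restricting to the given order on each I_s and on J and satisfying the non-interleaving condition, onto the set of pairs (>, Q) where > is a total order on ⊔_{s∈S} I_s restricting to the given order on each I_s and satisfying the non-interleaving condition, and Q : ⊔_{s∈S} I_s → J′ is nondecreasing with respect to >. -/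
theorem Finset.min_le_coe_iff_mem {J : Type*} [LinearOrder J] {s : Finset J}
    (hs : IsUpperSet (s : Set J)) {j : J} : s.min ≤ j ↔ j ∈ s := by
  refine ⟨fun h => ?_, Finset.min_le⟩
  have hne : s.Nonempty := Finset.nonempty_iff_ne_empty.2 (by rintro rfl; simp at h)
  obtain ⟨m, hmin⟩ := Finset.min_of_nonempty hne
  rw [hmin] at h
  exact hs (WithTop.coe_le_coe.1 h) (Finset.mem_of_min hmin)

theorem Finset.min_filter_ge {J : Type*} [LinearOrder J] [Fintype J] (w : WithTop J) :
    (Finset.univ.filter fun j : J => w ≤ j).min = w := by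
  refine le_antisymm ?_ (Finset.le_min_iff.2 fun j hj => (Finset.mem_filter.1 hj).2)
  cases w with
  | top => exact le_top
  | coe j => exact Finset.min_le (by simp)

section GlueOrder

variable {α J : Type*} [LinearOrder J]

open scoped Classical in
noncomputable def firstAbove [Fintype J] (r : α ⊕ J → α ⊕ J → Prop) (x : α) : WithTop J :=
  (Finset.univ.filter fun j : J => r (.inl x) (.inr j)).min

def glueOrder (q : α → α → Prop) (Q : α → WithTop J) : α ⊕ J → α ⊕ J → Prop
  | .inl x, .inl y => q x y
  | .inl x, .inr j => Q x ≤ j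
  | .inr j, .inl x => j < Q x
  | .inr j, .inr j' => j < j'

theorem isStrictTotalOrder_glueOrder {q : α → α → Prop} [IsStrictTotalOrder α q]
    {Q : α → WithTop J} (hQ : ∀ x y, q x y → Q x ≤ Q y) :
    IsStrictTotalOrder (α ⊕ J) (glueOrder q Q) where
  trichotomous := by
    rintro (x | j) (y | j') h₁ h₂
    · exact congrArg _ (Std.Trichotomous.trichotomous x y h₁ h₂)
    · exact (h₁ (not_lt.1 h₂)).elim
    · exact (h₂ (not_lt.1 h₁)).elim
    · exact congrArg _ (le_antisymm (not_lt.1 h₂) (not_lt.1 h₁))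
  irrefl := by
    rintro (x | j)
    · exact irrefl_of q x
    · exact lt_irrefl j
  trans := by
    have hQlt : ∀ x y, Q x < Q y → q x y := fun x y h => by
      rcases trichotomous_of q x y with hxy | rfl | hyx
      · exact hxy
      · exact absurd h (lt_irrefl _)
      · exact absurd h (hQ _ _ hyx).not_gt
    rintro (x | j) (y | j') (z | j'') hab hbc <;> simp only [glueOrder] at hab hbc ⊢
    · exact _root_.trans hab hbc
    · exact (hQ _ _ hab).trans hbc
    · exact hQlt _ _ (hab.trans_lt hbc)
    · exact hab.trans (WithTop.coe_le_coe.2 hbc.le)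
    · exact hab.trans_le (hQ _ _ hbc)
    · exact WithTop.coe_lt_coe.1 (hab.trans_le hbc)
    · exact (WithTop.coe_lt_coe.2 hab).trans hbc
    · exact hab.trans hbc

variable [Fintype J] {r : α ⊕ J → α ⊕ J → Prop}

theorem inl_lt_inr_iff_firstAbove_le [IsTrans (α ⊕ J) r]
    (hJ : ∀ j j' : J, j < j' → r (.inr j) (.inr j')) (x : α) (j : J) :
    r (.inl x) (.inr j) ↔ firstAbove r x ≤ j := by
  have hup : IsUpperSet {j : J | r (.inl x) (.inr j)} := fun j₁ j₂ hle h₁ => by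
    rcases hle.eq_or_lt with rfl | hlt
    · exact h₁
    · exact _root_.trans h₁ (hJ _ _ hlt)
  rw [firstAbove, Finset.min_le_coe_iff_mem (by simpa using hup)]
  simp

theorem firstAbove_mono [IsTrans (α ⊕ J) r] {x y : α} (hxy : r (.inl x) (.inl y)) :
    firstAbove r x ≤ firstAbove r y := by
  refine Finset.le_min_iff.2 fun j hj => Finset.min_le ?_
  simp only [Finset.mem_filter, Finset.mem_univ, true_and] at hj ⊢
  exact _root_.trans hxy hj

theorem glueOrder_firstAbove [IsStrictTotalOrder (α ⊕ J) r]
    (hJ : ∀ j j' : J, j < j' ↔ r (.inr j) (.inr j')) :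
    glueOrder (fun x y => r (.inl x) (.inl y)) (firstAbove r) = r := by
  have key := inl_lt_inr_iff_firstAbove_le fun j j' => (hJ j j').1
  funext a b
  apply propext
  rcases a with x | j <;> rcases b with y | j'
  · rfl
  · exact (key x j').symm
  · change (j : WithTop J) < firstAbove r y ↔ _
    rw [← not_le, ← key]
    exact ⟨fun h => ((trichotomous_of r _ _).resolve_left h).resolve_left Sum.inl_ne_inr,
      asymm_of r⟩
  · exact hJ j j'

theorem firstAbove_glueOrder (q : α → α → Prop) (Q : α → WithTop J) :
    firstAbove (glueOrder q Q) = Q :=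
  funext fun x => by unfold firstAbove; convert Finset.min_filter_ge (Q x); rfl

end GlueOrder

open scoped Classical in
theorem statement15_general {S : Type*} {I : S → Type*}
    [∀ s, LinearOrder (I s)]
    (J : Type*) [Fintype J] [LinearOrder J] :
    Set.BijOn
      (fun r : ((Σ s, I s) ⊕ J) → ((Σ s, I s) ⊕ J) → Prop =>
        ((fun a b : Σ s, I s => r (Sum.inl a) (Sum.inl b),
          fun x : Σ s, I s =>
            (Finset.univ.filter fun j : J => r (Sum.inl x) (Sum.inr j)).min) :
          ((Σ s, I s) → (Σ s, I s) → Prop) × ((Σ s, I s) → WithTop J)))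
      {r | IsStrictTotalOrder ((Σ s, I s) ⊕ J) r ∧
        (∀ (s : S) (a b : I s), a < b ↔ r (Sum.inl ⟨s, a⟩) (Sum.inl ⟨s, b⟩)) ∧
        (∀ j j' : J, j < j' ↔ r (Sum.inr j) (Sum.inr j')) ∧
        (∀ s s' : S, s ≠ s' → ¬ ∃ (a₁ b₁ : I s) (a₂ b₂ : I s'),
          r (Sum.inl ⟨s, a₁⟩) (Sum.inl ⟨s', a₂⟩) ∧
          r (Sum.inl ⟨s', a₂⟩) (Sum.inl ⟨s, b₁⟩) ∧
          r (Sum.inl ⟨s, b₁⟩) (Sum.inl ⟨s', b₂⟩))}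
      {q | IsStrictTotalOrder (Σ s, I s) q.1 ∧
        (∀ (s : S) (a b : I s), a < b ↔ q.1 ⟨s, a⟩ ⟨s, b⟩) ∧
        (∀ s s' : S, s ≠ s' → ¬ ∃ (a₁ b₁ : I s) (a₂ b₂ : I s'),
          q.1 ⟨s, a₁⟩ ⟨s', a₂⟩ ∧ q.1 ⟨s', a₂⟩ ⟨s, b₁⟩ ∧
          q.1 ⟨s, b₁⟩ ⟨s', b₂⟩) ∧
        (∀ x y : Σ s, I s, q.1 x y → q.2 x ≤ q.2 y)} := by
  refine ⟨?mapsTo, ?injOn, ?surjOn⟩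
  · rintro r ⟨hr, hI, -, hNI⟩
    exact ⟨(RelEmbedding.preimage .inl r).isStrictTotalOrder, hI, hNI,
      fun _ _ => firstAbove_mono⟩
  · rintro r ⟨hr, -, hJ, -⟩ r' ⟨hr', -, hJ', -⟩ h
    rw [← glueOrder_firstAbove hJ, ← glueOrder_firstAbove hJ']
    exact congrArg (fun p => glueOrder p.1 p.2) h
  · rintro ⟨q, Q⟩ ⟨hq, hI, hNI, hQ⟩
    exact ⟨glueOrder q Q, ⟨isStrictTotalOrder_glueOrder hQ, hI, fun _ _ => Iff.rfl, hNI⟩,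
      Prod.ext rfl (firstAbove_glueOrder q Q)⟩

open scoped Classical in
/-- The assignment `π ↦ (π|_{⊔ I_s}, Q)`, where `Q x` is the least
`j ∈ J` with `x <_π j` (and `Q x = M = ⊤` if there is no such `j`), is a bijection
from the set of non-interleaving total orders on `(⊔_{s∈S} I_s) ⊔ J` restricting to
the given orders, onto the set of pairs `(>, Q)` of a non-interleaving total order
on `⊔_{s∈S} I_s` restricting to the given orders together with a nondecreasing map
`Q : ⊔ I_s → J′ = J ⊔ {M}`. -/
theorem statement15 {S : Type*} [Fintype S] {I : S → Type*} [∀ s, Fintype (I s)]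
    [∀ s, LinearOrder (I s)] [∀ s, Nonempty (I s)]
    (J : Type*) [Fintype J] [LinearOrder J] :
    Set.BijOn
      (fun r : ((Σ s, I s) ⊕ J) → ((Σ s, I s) ⊕ J) → Prop =>
        ((fun a b : Σ s, I s => r (Sum.inl a) (Sum.inl b),
          fun x : Σ s, I s =>
            (Finset.univ.filter fun j : J => r (Sum.inl x) (Sum.inr j)).min) :
          ((Σ s, I s) → (Σ s, I s) → Prop) × ((Σ s, I s) → WithTop J)))
      {r | IsStrictTotalOrder ((Σ s, I s) ⊕ J) r ∧
        (∀ (s : S) (a b : I s), a < b ↔ r (Sum.inl ⟨s, a⟩) (Sum.inl ⟨s, b⟩)) ∧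
        (∀ j j' : J, j < j' ↔ r (Sum.inr j) (Sum.inr j')) ∧
        (∀ s s' : S, s ≠ s' → ¬ ∃ (a₁ b₁ : I s) (a₂ b₂ : I s'),
          r (Sum.inl ⟨s, a₁⟩) (Sum.inl ⟨s', a₂⟩) ∧
          r (Sum.inl ⟨s', a₂⟩) (Sum.inl ⟨s, b₁⟩) ∧
          r (Sum.inl ⟨s, b₁⟩) (Sum.inl ⟨s', b₂⟩))}
      {q | IsStrictTotalOrder (Σ s, I s) q.1 ∧
        (∀ (s : S) (a b : I s), a < b ↔ q.1 ⟨s, a⟩ ⟨s, b⟩) ∧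
        (∀ s s' : S, s ≠ s' → ¬ ∃ (a₁ b₁ : I s) (a₂ b₂ : I s'),
          q.1 ⟨s, a₁⟩ ⟨s', a₂⟩ ∧ q.1 ⟨s', a₂⟩ ⟨s, b₁⟩ ∧
          q.1 ⟨s, b₁⟩ ⟨s', b₂⟩) ∧
        (∀ x y : Σ s, I s, q.1 x y → q.2 x ≤ q.2 y)} :=
  statement15_general J
end

section
/- For every finite nonempty set S and every configuration p ∈ Conf(S), there exists a unique pruned 2-tree (≤₁, τ) on S such that p ∈ FN_{(≤₁,τ)}; in particular, the Fox–Neuwirth cells indexed by the pruned 2-trees on S form a partition of the configuration space Conf(S). -/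
/-- A pruned 2-tree on `S`: a linear order `r` (as a `≤`-relation) together with a
surjection `τ : S → Fin n` which is monotone with respect to `r`. -/
def IsPruned2Tree {S : Type*} {n : ℕ} (r : S → S → Prop) (τ : S → Fin n) : Prop :=
  IsLinearOrder S r ∧ Function.Surjective τ ∧ ∀ s s', r s s' → τ s ≤ τ s'

/-- The Fox–Neuwirth cell of a 2-tree `(r, τ)`: configurations `p` such that
(i) `τ s < τ s'` implies `x_s < x_{s'}`, and (ii) `τ s = τ s'` and `s <₁ s'`
imply `x_s = x_{s'}` and `y_s < y_{s'}`. -/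
def FNcell {S : Type*} {n : ℕ} (r : S → S → Prop) (τ : S → Fin n) :
    Set (S → ℝ × ℝ) :=
  {p | Function.Injective p ∧
    (∀ s s', τ s < τ s' → (p s).1 < (p s').1) ∧
    (∀ s s', τ s = τ s' → r s s' → s ≠ s' →
      (p s).1 = (p s').1 ∧ (p s).2 < (p s').2)}

/-- `σ ∈ D(τ, N)`: the additional conditions (B) and (C) relative to the 2-tree
`(r, τ)` (conditions (I), (II) and surjectivity, i.e. `σ ∈ D(S, N)`, are imposed
separately). -/
def MemDtree {S : Type*} {n k : ℕ} (r : S → S → Prop) (τ : S → Fin n)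
    (σ : Fin k → S) : Prop :=
  (∀ s s' : S, s ≠ s' →
      (∃ i j₁ j₂ : Fin k, σ i = s ∧ σ j₁ = s' ∧ σ j₂ = s' ∧ j₁ < i ∧ i < j₂) →
      τ s < τ s') ∧
  (∀ s s' : S, τ s = τ s' → r s s' → s ≠ s' →
      ∀ i j : Fin k, σ i = s → σ j = s' → i < j)


/-!
Every cell condition only compares coordinates, so a pruned 2-tree whose cell contains `p` is
read off from `p`: `τ` must induce the same strict order as the abscissae, hence is the rank of
`x_s` among the distinct abscissae, and `≤₁` must be the lexicographic order of the points
`p s`. Conversely, for injective `p` these two choices form a pruned 2-tree whose cell contains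
`p`.
-/

open Finset Function

section valueRank

variable {S α : Type*} [Fintype S] [LinearOrder α]

noncomputable def valueRank (f : S → α) (s : S) : Fin #(univ.image f) :=
  ((univ.image f).orderIsoOfFin rfl).symm ⟨f s, mem_image_of_mem f (mem_univ s)⟩

lemma valueRank_lt_valueRank_iff {f : S → α} {s t : S} :
    valueRank f s < valueRank f t ↔ f s < f t := by
  simp only [valueRank, OrderIso.lt_iff_lt, Subtype.mk_lt_mk]

lemma valueRank_eq_valueRank_iff {f : S → α} {s t : S} :
    valueRank f s = valueRank f t ↔ f s = f t := by
  simp only [valueRank, EmbeddingLike.apply_eq_iff_eq, Subtype.mk.injEq]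

lemma valueRank_surjective (f : S → α) : Surjective (valueRank f) := by
  intro i
  obtain ⟨s, -, hs⟩ := mem_image.mp ((univ.image f).orderIsoOfFin rfl i).2
  refine ⟨s, ?_⟩
  rw [valueRank, OrderIso.symm_apply_eq]
  exact Subtype.ext hs

end valueRank

lemma exists_orderIso_comp_eq_of_lt_iff_lt {S α β : Type*} [LinearOrder α] [LinearOrder β]
    {f : S → α} {g : S → β} (hf : Surjective f) (hg : Surjective g)
    (h : ∀ s t, f s < f t ↔ g s < g t) : ∃ e : α ≃o β, ∀ s, e (f s) = g s := by
  have hfg : ∀ s t, f s = f t → g s = g t := fun s t hst =>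
    le_antisymm (not_lt.mp fun hlt => ((h t s).mpr hlt).ne' hst)
      (not_lt.mp fun hlt => ((h s t).mpr hlt).ne hst)
  have hcomp : ∀ s, g (surjInv hf (f s)) = g s := fun s => hfg _ _ (surjInv_eq hf _)
  have hmono : StrictMono (g ∘ surjInv hf) := fun a b hab =>
    (h _ _).mp (by simpa only [surjInv_eq hf] using hab)
  have hsurj : Surjective (g ∘ surjInv hf) := fun b =>
    (hg b).elim fun s hs => ⟨f s, (hcomp s).trans hs⟩
  exact ⟨hmono.orderIsoOfSurjective _ hsurj, hcomp⟩

lemma Fin.eq_and_val_eq_of_lt_iff_lt {S : Type*} {n n' : ℕ} {τ : S → Fin n} {τ' : S → Fin n'}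
    (hτ : Surjective τ) (hτ' : Surjective τ') (h : ∀ s t, τ s < τ t ↔ τ' s < τ' t) :
    n = n' ∧ ∀ s, (τ s : ℕ) = τ' s := by
  obtain ⟨e, he⟩ := exists_orderIso_comp_eq_of_lt_iff_lt hτ hτ' h
  exact ⟨Fin.equiv_iff_eq.mp ⟨e.toEquiv⟩, fun s => by rw [← he, Fin.coe_orderIso_apply]⟩

section FNcell

variable {S : Type*} {n : ℕ} {r : S → S → Prop} {τ : S → Fin n} {p : S → ℝ × ℝ}

lemma fst_eq_of_mem_FNcell [Std.Total r] (hp : p ∈ FNcell r τ) {s t : S} (h : τ s = τ t) :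
    (p s).1 = (p t).1 := by
  obtain rfl | hne := eq_or_ne s t
  · rfl
  rcases Std.Total.total (r := r) s t with hst | hts
  · exact (hp.2.2 s t h hst hne).1
  · exact (hp.2.2 t s h.symm hts hne.symm).1.symm

lemma lt_iff_fst_lt_of_mem_FNcell [Std.Total r] (hp : p ∈ FNcell r τ) {s t : S} :
    τ s < τ t ↔ (p s).1 < (p t).1 := by
  refine ⟨hp.2.1 s t, fun hx => ?_⟩
  rcases lt_trichotomy (τ s) (τ t) with hlt | heq | hgt
  · exact hlt
  · exact absurd (fst_eq_of_mem_FNcell hp heq) hx.ne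
  · exact absurd (hp.2.1 t s hgt) hx.not_gt

lemma toLex_lt_of_mem_FNcell (hmono : ∀ s t, r s t → τ s ≤ τ t) (hp : p ∈ FNcell r τ)
    {s t : S} (hst : r s t) (hne : s ≠ t) : toLex (p s) < toLex (p t) := by
  rw [Prod.Lex.toLex_lt_toLex]
  rcases (hmono s t hst).lt_or_eq with hlt | heq
  · exact Or.inl (hp.2.1 s t hlt)
  · exact Or.inr (hp.2.2 s t heq hst hne)

lemma rel_iff_toLex_le_of_mem_FNcell (hT : IsPruned2Tree r τ) (hp : p ∈ FNcell r τ) {s t : S} :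
    r s t ↔ toLex (p s) ≤ toLex (p t) := by
  have := hT.1
  obtain rfl | hne := eq_or_ne s t
  · exact iff_of_true (refl_of r s) le_rfl
  refine ⟨fun hst => (toLex_lt_of_mem_FNcell hT.2.2 hp hst hne).le, fun hle => ?_⟩
  exact (total_of r s t).resolve_right fun hts =>
    (toLex_lt_of_mem_FNcell hT.2.2 hp hts hne.symm).not_ge hle

end FNcell

lemma isLinearOrder_le_comp_of_injective {S α : Type*} [LinearOrder α] {f : S → α}
    (hf : Injective f) : IsLinearOrder S (fun s t => f s ≤ f t) :=
  (RelEmbedding.preimage ⟨f, hf⟩ (· ≤ ·)).isLinearOrder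

section lexTree

variable {S : Type*} [Fintype S] {p : S → ℝ × ℝ}

lemma isPruned2Tree_toLex_valueRank (hp : Injective p) :
    IsPruned2Tree (fun s t => toLex (p s) ≤ toLex (p t)) (valueRank fun s => (p s).1) := by
  refine ⟨isLinearOrder_le_comp_of_injective (f := fun s => toLex (p s))
    (toLex.injective.comp hp), valueRank_surjective _, fun s t hst => ?_⟩
  rcases Prod.Lex.toLex_le_toLex.mp hst with hlt | ⟨heq, -⟩
  · exact (valueRank_lt_valueRank_iff (f := fun s => (p s).1)).mpr hlt |>.le
  · exact (valueRank_eq_valueRank_iff (f := fun s => (p s).1)).mpr heq |>.le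

lemma mem_FNcell_toLex_valueRank (hp : Injective p) :
    p ∈ FNcell (fun s t => toLex (p s) ≤ toLex (p t)) (valueRank fun s => (p s).1) := by
  refine ⟨hp, fun s t => (valueRank_lt_valueRank_iff (f := fun s => (p s).1)).mp,
    fun s t hτ hst hne => ?_⟩
  have hx := (valueRank_eq_valueRank_iff (f := fun s => (p s).1)).mp hτ
  rcases Prod.Lex.toLex_le_toLex.mp hst with hlt | ⟨-, hy⟩
  · exact absurd hx hlt.ne
  · exact ⟨hx, hy.lt_of_ne fun hy' => hne (hp (Prod.ext hx hy'))⟩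

end lexTree

theorem statement16_general {S : Type*} [Fintype S]
    (p : S → ℝ × ℝ) (hp : p ∈ Conf S) :
    (∃ (n : ℕ) (r : S → S → Prop) (τ : S → Fin n),
        IsPruned2Tree r τ ∧ p ∈ FNcell r τ) ∧
    (∀ (n n' : ℕ) (r r' : S → S → Prop) (τ : S → Fin n) (τ' : S → Fin n'),
        IsPruned2Tree r τ → p ∈ FNcell r τ →
        IsPruned2Tree r' τ' → p ∈ FNcell r' τ' →
        n = n' ∧ r = r' ∧ ∀ s, (τ s : ℕ) = (τ' s : ℕ)) := by
  refine ⟨⟨_, _, _, isPruned2Tree_toLex_valueRank hp, mem_FNcell_toLex_valueRank hp⟩, ?_⟩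
  intro n n' r r' τ τ' hT hpT hT' hpT'
  have := hT.1
  have := hT'.1
  obtain ⟨hn, hτ⟩ := Fin.eq_and_val_eq_of_lt_iff_lt hT.2.1 hT'.2.1 fun s t => by
    rw [lt_iff_fst_lt_of_mem_FNcell hpT, lt_iff_fst_lt_of_mem_FNcell hpT']
  refine ⟨hn, ?_, hτ⟩
  ext s t
  rw [rel_iff_toLex_le_of_mem_FNcell hT hpT, rel_iff_toLex_le_of_mem_FNcell hT' hpT']

/-- For every finite nonempty `S` and configuration `p ∈ Conf(S)`
there is a unique pruned 2-tree `(r, τ)` on `S` with `p ∈ FN_{(r,τ)}`; in particular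
the Fox–Neuwirth cells partition `Conf(S)`. -/
theorem statement16 {S : Type*} [Fintype S] [Nonempty S]
    (p : S → ℝ × ℝ) (hp : p ∈ Conf S) :
    (∃ (n : ℕ) (r : S → S → Prop) (τ : S → Fin n),
        IsPruned2Tree r τ ∧ p ∈ FNcell r τ) ∧
    (∀ (n n' : ℕ) (r r' : S → S → Prop) (τ : S → Fin n) (τ' : S → Fin n'),
        IsPruned2Tree r τ → p ∈ FNcell r τ →
        IsPruned2Tree r' τ' → p ∈ FNcell r' τ' →
        n = n' ∧ r = r' ∧ ∀ s, (τ s : ℕ) = (τ' s : ℕ)) :=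
  statement16_general p hp
end

section
/- Let S be a finite set with m = |S|, let N ≥ 0 be an integer, and let σ ∈ D(S, N). Then the relation <_σ on S, defined by s <_σ s̃ iff either some element of σ⁻¹(s) lies strictly between two elements of σ⁻¹(s̃), or every element of σ⁻¹(s) is smaller than every element of σ⁻¹(s̃), is a strict linear (total) order on S. -/
open Finset Function

section LastIndex

variable {S : Type*} {k : ℕ} {σ : Fin k → S}

open Classical in
noncomputable def lastIndex (hσ : Surjective σ) (s : S) : Fin k :=
  (univ.filter (σ · = s)).max' ⟨(hσ s).choose, by simpa using (hσ s).choose_spec⟩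

theorem apply_lastIndex (hσ : Surjective σ) (s : S) : σ (lastIndex hσ s) = s := by
  classical
  simpa [lastIndex] using max'_mem (univ.filter (σ · = s)) _

theorem le_lastIndex (hσ : Surjective σ) {s : S} {i : Fin k} (hi : σ i = s) :
    i ≤ lastIndex hσ s :=
  le_max' _ i (by simp [hi])

theorem lastIndex_injective (hσ : Surjective σ) : Injective (lastIndex hσ) :=
  LeftInverse.injective (apply_lastIndex hσ)

theorem lastIndex_lt_of_ltSigma (hσ : Surjective σ) (hII : CondII σ) {s s' : S}
    (h : LtSigma σ s s') : lastIndex hσ s < lastIndex hσ s' := by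
  obtain ⟨hne, ⟨i, j₁, j₂, hi, hj₁, hj₂, hj₁i, hij₂⟩ | hbefore⟩ := h
  · by_contra! hle
    have hj₂_lt : j₂ < lastIndex hσ s :=
      ((le_lastIndex hσ hj₂).trans hle).lt_of_ne fun h ↦
        hne (by rw [← apply_lastIndex hσ s, ← h, hj₂])
    exact hII ⟨s', s, j₁, i, j₂, lastIndex hσ s, hne.symm, hj₁i, hij₂, hj₂_lt, hj₁, hj₂, hi,
      apply_lastIndex hσ s⟩
  · exact hbefore _ _ (apply_lastIndex hσ s) (apply_lastIndex hσ s')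

theorem ltSigma_of_lastIndex_lt (hσ : Surjective σ) {s s' : S}
    (h : lastIndex hσ s < lastIndex hσ s') : LtSigma σ s s' := by
  have hne : s ≠ s' := fun hs ↦ h.ne (congrArg _ hs)
  refine ⟨hne, ?_⟩
  by_cases hbefore : ∀ i j : Fin k, σ i = s → σ j = s' → i < j
  · exact Or.inr hbefore
  · push Not at hbefore
    obtain ⟨i, j, hi, hj, hji⟩ := hbefore
    have hji' : j < i := hji.lt_of_ne fun h ↦ hne (by rw [← hi, ← hj, h])
    exact Or.inl ⟨i, j, lastIndex hσ s', hi, hj, apply_lastIndex hσ s', hji',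
      (le_lastIndex hσ hi).trans_lt h⟩

theorem ltSigma_iff_lastIndex_lt (hσ : Surjective σ) (hII : CondII σ) {s s' : S} :
    LtSigma σ s s' ↔ lastIndex hσ s < lastIndex hσ s' :=
  ⟨lastIndex_lt_of_ltSigma hσ hII, ltSigma_of_lastIndex_lt hσ⟩

noncomputable def lastIndexEmbedding (hσ : Surjective σ) (hII : CondII σ) :
    LtSigma σ ↪r ((· < ·) : Fin k → Fin k → Prop) :=
  ⟨⟨lastIndex hσ, lastIndex_injective hσ⟩, (ltSigma_iff_lastIndex_lt hσ hII).symm⟩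

end LastIndex

theorem statement17_general {S : Type*} (k : ℕ) (σ : Fin k → S) (hσ : MemD σ) :
    IsStrictTotalOrder S (LtSigma σ) :=
  (lastIndexEmbedding hσ.1 hσ.2.2).isStrictTotalOrder

/-- For a finite set `S` and `σ ∈ D(S, N)`, the relation `<_σ`
is a strict linear (total) order on `S`. -/
theorem statement17 {S : Type*} [Fintype S] (N k : ℕ)
    (hk : k = N + Fintype.card S) (σ : Fin k → S) (hσ : MemD σ) :
    IsStrictTotalOrder S (LtSigma σ) :=
  statement17_general k σ hσ
end
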